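/- Let R be a commutative unital ring and p : (M,F) → (N,F) a morphism of filtered cochain complexes of R-modules. Then p has the right lifting property with respect to the filtered map 0 → D_R(n,p) for every n ∈ ℤ and p ∈ ℕ if and only if F^k p^n : F^kM^n → F^kN^n is surjective for every k ∈ ℕ and n ∈ ℤ. -/

import Mathlib

open CategoryTheory Limits ZeroObject

noncomputable section

variable (R : Type) [CommRing R]

/-- The category of unbounded cochain complexes of `R`-modules. -/
abbrev Cx := CochainComplex (ModuleCat.{0} R) ℤ



/-- The underlying module of `D_R(n)` in degree `i`: it is (isomorphic to) `R` if
`i = n` or `i = n+1`, and the zero module otherwise. -/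
abbrev diskFun (n i : ℤ) : Type := PLift (i = n ∨ i = n + 1) → R

/-- The differential of the disk complex `D_R(n)`. -/
def diskD (n i j : ℤ) : (diskFun R n i) →ₗ[R] (diskFun R n j) where
  toFun f _ := if hij : i = n ∧ j = n + 1 then f ⟨Or.inl hij.1⟩ else 0
  map_add' f g := by
    funext h
    by_cases hij : i = n ∧ j = n + 1 <;> simp [hij]
  map_smul' r f := by
    funext h
    by_cases hij : i = n ∧ j = n + 1 <;> simp [hij]

lemma diskD_apply (n i j : ℤ) (f : diskFun R n i) (h : PLift (j = n ∨ j = n + 1)) :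
    diskD R n i j f h = if hij : i = n ∧ j = n + 1 then f ⟨Or.inl hij.1⟩ else 0 := rfl

/-- The disk complex `D_R(n)`, with `R` in degrees `n` and `n+1`, the identity as the only
non-trivial differential, and `0` elsewhere. -/
def disk (n : ℤ) : Cx R where
  X i := ModuleCat.of R (diskFun R n i)
  d i j := ModuleCat.ofHom (diskD R n i j)
  shape i j hij := by
    apply ModuleCat.hom_ext
    apply LinearMap.ext
    intro f
    funext h
    have hn : ¬ (i = n ∧ j = n + 1) := by
      rintro ⟨rfl, rfl⟩
      exact hij rfl
    show diskD R n i j f h = _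
    rw [diskD_apply, dif_neg hn]
    rfl
  d_comp_d' i j k _ _ := by
    apply ModuleCat.hom_ext
    apply LinearMap.ext
    intro f
    funext h
    show diskD R n j k (diskD R n i j f) h = _
    rw [diskD_apply]
    split_ifs with hjk
    · rw [diskD_apply]
      have hn : ¬ (i = n ∧ j = n + 1) := by
        obtain ⟨h1, h2⟩ := hjk
        rintro ⟨rfl, h3⟩
        omega
      rw [dif_neg hn]
      rfl
    · rfl

/-- The underlying module of `S_R(n)` in degree `i`. -/
abbrev sphereFun (n i : ℤ) : Type := PLift (i = n) → R

/-- The sphere complex `S_R(n)`, with `R` in degree `n` and `0` elsewhere. -/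
def sphere (n : ℤ) : Cx R where
  X i := ModuleCat.of R (sphereFun R n i)
  d _ _ := 0
  shape _ _ _ := rfl
  d_comp_d' := by intros; simp

/-- The degreewise component of the map `S_R(n+1) ⟶ D_R(n)`. -/
def sphereToDiskHom (n i : ℤ) : (sphereFun R (n + 1) i) →ₗ[R] (diskFun R n i) where
  toFun g _ := if hi : i = n + 1 then g ⟨hi⟩ else 0
  map_add' g₁ g₂ := by
    funext h
    by_cases hi : i = n + 1 <;> simp [hi]
  map_smul' r g := by
    funext h
    by_cases hi : i = n + 1 <;> simp [hi]

lemma sphereToDiskHom_apply (n i : ℤ) (g : sphereFun R (n + 1) i)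
    (h : PLift (i = n ∨ i = n + 1)) :
    sphereToDiskHom R n i g h = if hi : i = n + 1 then g ⟨hi⟩ else 0 := rfl

/-- The map `S_R(n+1) ⟶ D_R(n)` which is the identity of `R` in degree `n+1`. -/
def sphereToDisk (n : ℤ) : sphere R (n + 1) ⟶ disk R n where
  f i := ModuleCat.ofHom (sphereToDiskHom R n i)
  comm' i j _ := by
    apply ModuleCat.hom_ext
    apply LinearMap.ext
    intro g
    funext h
    show diskD R n i j (sphereToDiskHom R n i g) h = sphereToDiskHom R n j ((0 : _ →ₗ[R] _) g) h
    simp only [LinearMap.zero_apply, map_zero, Pi.zero_apply]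
    rw [diskD_apply]
    split_ifs with hij
    · show (if hi : i = n + 1 then g ⟨hi⟩ else 0) = 0
      have hn : ¬ i = n + 1 := by
        obtain ⟨h1, h2⟩ := hij
        omega
      rw [dif_neg hn]
    · rfl

/-- A map of cochain complexes is degreewise surjective if it is surjective in each degree. -/
def DegSurj {M N : Cx R} (p : M ⟶ N) : Prop := ∀ n : ℤ, Function.Surjective (p.f n)


/-- A filtered cochain complex of `R`-modules: a cochain complex `C` together with a
decreasing `ℕ`-indexed filtration by subcomplexes `C = F⁰C ⊇ F¹C ⊇ F²C ⊇ ⋯`. -/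
structure FCx where
  /-- the underlying cochain complex -/
  C : Cx R
  /-- the filtration, given degreewise by submodules -/
  F : ℕ → ∀ i : ℤ, Submodule R (C.X i)
  /-- the filtration is decreasing -/
  antitone : ∀ p q : ℕ, p ≤ q → ∀ i : ℤ, F q i ≤ F p i
  /-- `F⁰C = C` -/
  zero_top : ∀ i : ℤ, F 0 i = ⊤
  /-- each filtration level is a subcomplex -/
  d_stable : ∀ (p : ℕ) (i j : ℤ), ∀ x ∈ F p i, C.d i j x ∈ F p j

/-- A morphism of filtered cochain complexes: a cochain map preserving the filtrations. -/
@[ext]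
structure FHom (M N : FCx R) where
  /-- the underlying cochain map -/
  φ : M.C ⟶ N.C
  /-- compatibility with the filtrations -/
  preserves : ∀ (p : ℕ) (i : ℤ), ∀ x ∈ M.F p i, φ.f i x ∈ N.F p i

/-- The category of filtered cochain complexes of `R`-modules. -/
instance : Category (FCx R) where
  Hom M N := FHom R M N
  id M := ⟨𝟙 M.C, fun p i x hx => by simpa using hx⟩
  comp f g := ⟨f.φ ≫ g.φ, fun p i x hx => by
    have h1 := f.preserves p i x hx
    have h2 := g.preserves p i _ h1
    simpa using h2⟩
  id_comp f := by apply FHom.ext; simp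
  comp_id f := by apply FHom.ext; simp
  assoc f g h := by apply FHom.ext; simp

@[simp] lemma comp_φ {M N P : FCx R} (f : M ⟶ N) (g : N ⟶ P) :
    (f ≫ g).φ = f.φ ≫ g.φ := rfl

/-- The `p`-th level `F^p M` of the filtration, as a cochain complex. -/
def FCx.level {R : Type} [CommRing R] (M : FCx R) (p : ℕ) : Cx R where
  X i := ModuleCat.of R (M.F p i)
  d i j := ModuleCat.ofHom (LinearMap.restrict (M.C.d i j).hom (fun x hx => M.d_stable p i j x hx))
  shape i j hij := by
    apply ModuleCat.hom_ext
    apply LinearMap.ext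
    intro x
    apply Subtype.ext
    show M.C.d i j x.1 = _
    rw [M.C.shape i j hij]
    rfl
  d_comp_d' i j k _ _ := by
    apply ModuleCat.hom_ext
    apply LinearMap.ext
    intro x
    apply Subtype.ext
    show M.C.d j k (M.C.d i j x.1) = _
    have h0 : M.C.d i j ≫ M.C.d j k = 0 := M.C.d_comp_d i j k
    have h1 : M.C.d j k (M.C.d i j x.1) = (M.C.d i j ≫ M.C.d j k) x.1 := rfl
    rw [h1, h0]
    rfl

/-- The restriction `F^p f : F^p M ⟶ F^p N` of a filtered morphism to the `p`-th filtration
levels. -/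
def levelMap {R : Type} [CommRing R] {M N : FCx R} (f : M ⟶ N) (p : ℕ) :
    M.level p ⟶ N.level p where
  f i := ModuleCat.ofHom (LinearMap.restrict (f.φ.f i).hom (fun x hx => f.preserves p i x hx))
  comm' i j _ := by
    apply ModuleCat.hom_ext
    apply LinearMap.ext
    intro x
    apply Subtype.ext
    show N.C.d i j (f.φ.f i x.1) = f.φ.f j (M.C.d i j x.1)
    have h : (f.φ.f i ≫ N.C.d i j) x.1 = (M.C.d i j ≫ f.φ.f j) x.1 := by
      rw [f.φ.comm i j]
    exact h

/-- A filtered morphism is a (projective) fibration if each `F^p f` is degreewise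
surjective. -/
def FFib {M N : FCx R} (f : M ⟶ N) : Prop :=
  ∀ (p : ℕ) (i : ℤ), Function.Surjective ((levelMap f p).f i)

/-- A filtered morphism is a filtered weak equivalence if each `F^p f` is a
quasi-isomorphism, i.e. `H^n (F^p f)` is an isomorphism for all `n` and `p`. -/
def FWeq {M N : FCx R} (f : M ⟶ N) : Prop :=
  ∀ p : ℕ, QuasiIso (levelMap f p)

/-- The filtered disk `D_R(n,p)`: the complex `D_R(n)` with filtration which is everything
in filtration degrees `k ≤ p` and zero above. -/
def fdisk (n : ℤ) (p : ℕ) : FCx R where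
  C := disk R n
  F k _ := if k ≤ p then ⊤ else ⊥
  antitone a b hab i := by
    by_cases hb : b ≤ p
    · have ha : a ≤ p := le_trans hab hb
      simp [ha, hb]
    · simp [hb]
  zero_top i := by simp
  d_stable k i j x hx := by
    by_cases hk : k ≤ p
    · simp [hk]
    · simp only [if_neg hk, Submodule.mem_bot] at hx ⊢
      rw [hx]
      exact map_zero _

/-- The filtered sphere `S_R(n,p)`. -/
def fsphere (n : ℤ) (p : ℕ) : FCx R where
  C := sphere R n
  F k _ := if k ≤ p then ⊤ else ⊥
  antitone a b hab i := by
    by_cases hb : b ≤ p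
    · have ha : a ≤ p := le_trans hab hb
      simp [ha, hb]
    · simp [hb]
  zero_top i := by simp
  d_stable k i j x hx := by
    by_cases hk : k ≤ p
    · simp [hk]
    · simp only [if_neg hk, Submodule.mem_bot] at hx ⊢
      rw [hx]
      exact map_zero _

/-- The filtered map `S_R(n+1,p) ⟶ D_R(n,p)`. -/
def fsphereToDisk (n : ℤ) (p : ℕ) : fsphere R (n + 1) p ⟶ fdisk R n p where
  φ := sphereToDisk R n
  preserves k i x hx := by
    by_cases hk : k ≤ p
    · show _ ∈ (if k ≤ p then ⊤ else ⊥ : Submodule R (diskFun R n i))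
      rw [if_pos hk]
      exact Submodule.mem_top
    · show _ ∈ (if k ≤ p then ⊤ else ⊥ : Submodule R (diskFun R n i))
      rw [if_neg hk]
      replace hx : x = 0 := by
        have hx' : x ∈ (if k ≤ p then ⊤ else ⊥ : Submodule R (sphereFun R (n + 1) i)) := hx
        rw [if_neg hk] at hx'
        exact (Submodule.mem_bot R).1 hx'
      subst hx
      exact (Submodule.mem_bot R).2 (map_zero _)

/-- The zero filtered complex. -/
def fzero : FCx R where
  C := 0
  F _ _ := ⊤
  antitone _ _ _ _ := le_refl _
  zero_top _ := rfl
  d_stable _ _ _ _ _ := Submodule.mem_top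

/-- The unique (zero) filtered map from the zero filtered complex. -/
def fromFZero (M : FCx R) : fzero R ⟶ M where
  φ := 0
  preserves p i x _ := by
    have h : ((0 : (fzero R).C ⟶ M.C).f i) x = 0 := by
      rw [HomologicalComplex.zero_f]
      rfl
    rw [h]
    exact (M.F p i).zero_mem


/-- `f` is a retract of `g` in the arrow category: there are morphisms of arrows
`f → g → f` composing to the identity of `f`. -/
def IsRetractOf {C : Type 1} [Category.{0} C] {X Y X' Y' : C} (f : X ⟶ Y) (g : X' ⟶ Y') : Prop :=
  ∃ (i : Arrow.mk f ⟶ Arrow.mk g) (r : Arrow.mk g ⟶ Arrow.mk f), i ≫ r = 𝟙 (Arrow.mk f)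

/-- A cochain complex `A` is cofibrant if `0 ⟶ A` has the left lifting property with respect
to every degreewise surjective quasi-isomorphism. -/
def Cofibrant (A : Cx R) : Prop :=
  ∀ {X Y : Cx R} (p : X ⟶ Y), (∀ n : ℤ, Function.Surjective (p.f n)) → QuasiIso p →
    HasLiftingProperty (0 : (0 : Cx R) ⟶ A) p

/-- A filtered morphism is a cofibration if it has the left lifting property with respect to
every filtered trivial fibration, i.e. every filtered morphism which is in each filtration
level a degreewise surjective quasi-isomorphism. -/
def FCofib {M N : FCx R} (i : M ⟶ N) : Prop :=
  ∀ {X Y : FCx R} (p : X ⟶ Y), FFib R p → FWeq R p → HasLiftingProperty i p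

/-- A filtered complex `A` is cofibrant if `0 ⟶ A` has the left lifting property with
respect to every filtered trivial fibration. -/
def FCofibrant (A : FCx R) : Prop :=
  ∀ {X Y : FCx R} (p : X ⟶ Y), FFib R p → FWeq R p → HasLiftingProperty (fromFZero R A) p

/-
A filtered map `D_R(n,p) ⟶ X` is the same thing as an element of `F^p X^n`: it is determined by
the image of the generator `1 ∈ D_R(n)^n`, and every `x ∈ F^p X^n` extends, by `1 ↦ x` and
`1 ↦ dx` in degree `n+1`, to a filtered cochain map. Under this bijection, composing with `f`
becomes `F^p f^n`, and since maps out of the zero filtered complex are unique, lifting against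
`0 ⟶ D_R(n,p)` means exactly that composing with `f` is surjective on maps out of `D_R(n,p)`.
-/

section

variable {R}

lemma fzero_hom_ext {X : FCx R} (g h : fzero R ⟶ X) : g = h :=
  FHom.ext ((isZero_zero (Cx R)).eq_of_src _ _)

lemma hasLiftingProperty_fromFZero_iff {A M N : FCx R} (f : M ⟶ N) :
    HasLiftingProperty (fromFZero R A) f ↔ Function.Surjective (fun L : A ⟶ M => L ≫ f) := by
  constructor
  · intro _ b
    have sq : CommSq (fromFZero R M) (fromFZero R A) f b := ⟨fzero_hom_ext _ _⟩
    exact ⟨sq.lift, sq.fac_right⟩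
  · intro hf
    refine ⟨fun {t b} _ => ?_⟩
    obtain ⟨L, hL⟩ := hf b
    exact ⟨⟨⟨L, fzero_hom_ext _ _, hL⟩⟩⟩

variable (R) in
def diskGen (n : ℤ) : diskFun R n n := fun _ => 1

def diskDescHom (X : Cx R) {n : ℤ} (x : X.X n) (i : ℤ) : diskFun R n i →ₗ[R] X.X i :=
  (if h : i = n then (LinearMap.proj ⟨Or.inl h⟩).smulRight ((X.XIsoOfEq h.symm).hom x) else 0) +
    (if h : i = n + 1 then
      (LinearMap.proj ⟨Or.inr h⟩).smulRight ((X.XIsoOfEq h.symm).hom (X.d n (n + 1) x))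
    else 0)

lemma diskD_self (n : ℤ) (g : diskFun R n n) (h : PLift (n + 1 = n ∨ n + 1 = n + 1)) :
    diskD R n n (n + 1) g h = g ⟨Or.inl rfl⟩ := by
  rw [diskD_apply, dif_pos ⟨rfl, rfl⟩]

lemma diskD_of_ne {n i : ℤ} (hi : i ≠ n) (j : ℤ) (g : diskFun R n i) : diskD R n i j g = 0 := by
  funext h
  rw [diskD_apply, dif_neg fun hij => hi hij.1]
  rfl

def diskDesc (X : Cx R) {n : ℤ} (x : X.X n) : disk R n ⟶ X where
  f i := ModuleCat.ofHom (diskDescHom X x i)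
  comm' := by
    rintro i j (rfl : i + 1 = j)
    refine ModuleCat.hom_ext (LinearMap.ext fun (g : diskFun R n i) => ?_)
    show X.d i (i + 1) (diskDescHom X x i g) = diskDescHom X x (i + 1) (diskD R n i (i + 1) g)
    by_cases hi : i = n
    · subst hi
      have hn1 : ¬ (i = i + 1) := by omega
      have hn2 : ¬ (i + 1 = i) := by omega
      simp [diskDescHom, diskD_self, hn1, hn2]
    rw [diskD_of_ne hi, map_zero]
    by_cases hi' : i = n + 1
    · subst hi'
      have hdd : X.d (n + 1) (n + 1 + 1) (X.d n (n + 1) x) = 0 := by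
        rw [← ModuleCat.comp_apply, X.d_comp_d]
        rfl
      simp [diskDescHom, hi, hdd]
    · simp [diskDescHom, hi, hi']

@[simp]
lemma diskDesc_f_diskGen (X : Cx R) {n : ℤ} (x : X.X n) :
    (diskDesc X x).f n (diskGen R n) = x := by
  have hn : ¬ (n = n + 1) := by omega
  show diskDescHom X x n (diskGen R n) = x
  simp [diskDescHom, hn, diskGen]

lemma diskFun_eq_smul_diskGen {n : ℤ} (g : diskFun R n n) :
    g = g ⟨Or.inl rfl⟩ • diskGen R n := by
  funext h
  simp [Subsingleton.elim h ⟨Or.inl rfl⟩, diskGen]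

lemma diskFun_eq_smul_diskD_diskGen {n : ℤ} (g : diskFun R n (n + 1)) :
    g = g ⟨Or.inr rfl⟩ • diskD R n n (n + 1) (diskGen R n) := by
  funext h
  simp [Subsingleton.elim h ⟨Or.inr rfl⟩, diskD_self, diskGen]

lemma disk_hom_f_diskD_diskGen {X : Cx R} {n : ℤ} (q : disk R n ⟶ X) :
    q.f (n + 1) (diskD R n n (n + 1) (diskGen R n)) = X.d n (n + 1) (q.f n (diskGen R n)) :=
  (congrArg (fun φ => φ.hom (diskGen R n)) (q.comm n (n + 1))).symm

lemma disk_hom_ext {X : Cx R} {n : ℤ} {q q' : disk R n ⟶ X}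
    (h : q.f n (diskGen R n) = q'.f n (diskGen R n)) : q = q' := by
  ext i g
  let φ : diskFun R n i →ₗ[R] X.X i := (q.f i).hom
  let ψ : diskFun R n i →ₗ[R] X.X i := (q'.f i).hom
  change φ g = ψ g
  by_cases hi : i = n
  · subst hi
    rw [diskFun_eq_smul_diskGen g, φ.map_smul, ψ.map_smul]
    exact congrArg _ h
  by_cases hi' : i = n + 1
  · subst hi'
    rw [diskFun_eq_smul_diskD_diskGen g, φ.map_smul, ψ.map_smul]
    exact congrArg _ ((disk_hom_f_diskD_diskGen q).trans
      ((congrArg _ h).trans (disk_hom_f_diskD_diskGen q').symm))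
  · have hg : @Eq (diskFun R n i) g 0 := funext fun h => absurd h.down (by omega)
    rw [hg, φ.map_zero, ψ.map_zero]

lemma diskGen_mem_fdisk (n : ℤ) (k : ℕ) : diskGen R n ∈ (fdisk R n k).F k n := by
  show diskGen R n ∈ (if k ≤ k then ⊤ else ⊥ : Submodule R (diskFun R n n))
  simp

lemma fdisk_F_eq_bot {n : ℤ} {k k' : ℕ} (hk : k < k') (i : ℤ) : (fdisk R n k).F k' i = ⊥ :=
  if_neg (not_le.mpr hk)

def fdiskDesc (X : FCx R) {n : ℤ} {k : ℕ} (x : X.F k n) : fdisk R n k ⟶ X where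
  φ := diskDesc X.C x.1
  preserves k' i g hg := by
    by_cases hk : k' ≤ k
    · have hx : x.1 ∈ X.F k' n := X.antitone k' k hk n x.2
      show diskDescHom X.C x.1 i g ∈ X.F k' i
      apply Submodule.add_mem
      · split_ifs with h
        · subst h
          simpa using Submodule.smul_mem _ _ hx
        · exact Submodule.zero_mem _
      · split_ifs with h
        · subst h
          simpa using Submodule.smul_mem _ _ (X.d_stable k' n (n + 1) _ hx)
        · exact Submodule.zero_mem _
    · rw [fdisk_F_eq_bot (not_le.mp hk), Submodule.mem_bot] at hg
      rw [hg, map_zero]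
      exact Submodule.zero_mem _

def fdiskEquiv (X : FCx R) (n : ℤ) (k : ℕ) : (fdisk R n k ⟶ X) ≃ (X.level k).X n where
  toFun g := ⟨g.φ.f n (diskGen R n), g.preserves k n _ (diskGen_mem_fdisk n k)⟩
  invFun := fdiskDesc X
  left_inv _ := FHom.ext (disk_hom_ext (diskDesc_f_diskGen _ _))
  right_inv _ := Subtype.ext (diskDesc_f_diskGen _ _)

lemma fdiskEquiv_comp {M N : FCx R} (f : M ⟶ N) (n : ℤ) (k : ℕ) :
    fdiskEquiv N n k ∘ (· ≫ f) = (levelMap f k).f n ∘ fdiskEquiv M n k :=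
  rfl

end

theorem statement_9 {M N : FCx R} (f : M ⟶ N) :
    (∀ (n : ℤ) (k : ℕ), HasLiftingProperty (fromFZero R (fdisk R n k)) f) ↔
      ∀ (k : ℕ) (i : ℤ), Function.Surjective ((levelMap f k).f i) := by
  simp only [hasLiftingProperty_fromFZero_iff]
  rw [forall_comm]
  refine forall₂_congr fun k n => ?_
  rw [← Equiv.comp_surjective _ (fdiskEquiv N n k), fdiskEquiv_comp, Equiv.surjective_comp]

end
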